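/- arXiv:1203.0539 — 4 statements merged into one kernel-verified Lean document; each statement's English description precedes it below -/
import Mathlib

section
/- Suppose a holomorphic curve has a parametrization x(t) = Σ_{i ≤ s} a_i t^i for |t| > R, where t ∈ ℂ, a_i ∈ ℂⁿ, Σ_{i>0} |a_i| > 0, and s ≥ 0 is an integer. Let f: ℂⁿ → ℂ be a polynomial of degree d. Define the truncated arc x̃(t) = Σ_{−(d−1)s ≤ i ≤ s} a_i t^i for |t| > R. If lim_{t→∞} f(x(t)) = b ∈ ℂ, then lim_{t→∞} f(x̃(t)) = b as well. -/
/-!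
Put `z = t⁻¹`. Since `aᵢ = 0` for `i > s`, the curve is `x(t) = tˢ g(z)` for the power series
`g(z) = ∑ₖ a_{s-k} zᵏ`, and the truncated arc is `x̃(t) = tˢ p(z)` with `p` the partial sum of
`g` of length `m = ds + 1`. Near `z = 0` both `g` and `p` are bounded and `g - p = O(|z|ᵐ)`, so
`x` and `x̃` are `O(|t|ˢ)` and `x - x̃ = O(|t|^{s-m})`. A polynomial of degree `d` is Lipschitz
with constant `O(Kᵈ⁻¹)` on the ball of radius `K`, hence
`f(x) - f(x̃) = O(|t|^{s(d-1)} |t|^{s-ds-1}) = O(|t|⁻¹) → 0`.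
-/

open Filter MvPolynomial Topology

theorem Finsupp.prod_pow_eq_prod_toMultiset_map {σ M : Type*} [CommMonoid M] (m : σ →₀ ℕ)
    (u : σ → M) : ∏ j ∈ m.support, u j ^ m j = ((Finsupp.toMultiset m).map u).prod := by
  rw [Finsupp.toMultiset_map, Finsupp.prod_toMultiset,
    Finsupp.prod_mapDomain_index (fun _ => pow_zero _) (fun _ _ _ => pow_add _ _ _)]
  rfl

section PolynomialEstimate

variable {𝕜 : Type*} [NormedCommRing 𝕜] [NormOneClass 𝕜]

theorem Multiset.norm_prod_map_le_pow_card {ι : Type*} {u : ι → 𝕜} {K : ℝ}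
    (hu : ∀ j, ‖u j‖ ≤ K) (M : Multiset ι) : ‖(M.map u).prod‖ ≤ K ^ card M := by
  induction M using Multiset.induction_on with
  | empty => simp
  | cons j M ih =>
    rw [map_cons, prod_cons, card_cons, pow_succ']
    exact (norm_mul_le _ _).trans
      (mul_le_mul (hu j) ih (norm_nonneg _) ((norm_nonneg _).trans (hu j)))

theorem Multiset.norm_prod_map_sub_prod_map_le {ι : Type*} {u v : ι → 𝕜} {K δ : ℝ}
    (hu : ∀ j, ‖u j‖ ≤ K) (hv : ∀ j, ‖v j‖ ≤ K) (huv : ∀ j, ‖u j - v j‖ ≤ δ)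
    (M : Multiset ι) :
    ‖(M.map u).prod - (M.map v).prod‖ ≤ card M * K ^ (card M - 1) * δ := by
  induction M using Multiset.induction_on with
  | empty => simp
  | cons j M ih =>
    have hK : 0 ≤ K := (norm_nonneg _).trans (hu j)
    have hδ : 0 ≤ δ := (norm_nonneg _).trans (huv j)
    have hK_pow : (card M : ℝ) * (K * K ^ (card M - 1)) = card M * K ^ card M := by
      rcases eq_or_ne (card M) 0 with h | h
      · simp [h]
      · rw [mul_pow_sub_one h]
    rw [map_cons, map_cons, prod_cons, prod_cons, card_cons, Nat.add_sub_cancel,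
      show u j * (M.map u).prod - v j * (M.map v).prod
        = (u j - v j) * (M.map u).prod + v j * ((M.map u).prod - (M.map v).prod) by ring]
    calc _ ≤ δ * K ^ card M + K * (card M * K ^ (card M - 1) * δ) :=
          (norm_add_le _ _).trans <| add_le_add
            ((norm_mul_le _ _).trans <| mul_le_mul (huv j) (norm_prod_map_le_pow_card hu M)
              (norm_nonneg _) hδ)
            ((norm_mul_le _ _).trans <| mul_le_mul (hv j) ih (norm_nonneg _) hK)
      _ = ((card M + 1 : ℕ) : ℝ) * K ^ card M * δ := by
          push_cast; linear_combination δ * hK_pow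

theorem MvPolynomial.exists_norm_eval_sub_eval_le {σ : Type*} [Fintype σ] {f : MvPolynomial σ 𝕜}
    {e : ℕ} (hf : f.totalDegree ≤ e + 1) :
    ∃ C, 0 ≤ C ∧ ∀ K, 1 ≤ K → ∀ u v : σ → 𝕜, ‖u‖ ≤ K → ‖v‖ ≤ K →
      ‖eval u f - eval v f‖ ≤ C * K ^ e * ‖u - v‖ := by
  refine ⟨(e + 1) * ∑ m ∈ f.support, ‖f.coeff m‖, by positivity, fun K hK u v hu hv => ?_⟩
  have hmonomial : ∀ m ∈ f.support,
      ‖∏ j ∈ m.support, u j ^ m j - ∏ j ∈ m.support, v j ^ m j‖ ≤ (e + 1) * K ^ e * ‖u - v‖ := by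
    intro m hm
    have hcard : Multiset.card (Finsupp.toMultiset m) ≤ e + 1 :=
      (Finsupp.card_toMultiset m ▸ le_totalDegree hm).trans hf
    rw [Finsupp.prod_pow_eq_prod_toMultiset_map, Finsupp.prod_pow_eq_prod_toMultiset_map]
    refine (Multiset.norm_prod_map_sub_prod_map_le (fun j => (norm_le_pi_norm u j).trans hu)
      (fun j => (norm_le_pi_norm v j).trans hv) (fun j => norm_le_pi_norm (u - v) j) _).trans ?_
    gcongr
    · exact_mod_cast hcard
    · omega
  rw [eval_eq, eval_eq, ← Finset.sum_sub_distrib, Finset.mul_sum, Finset.sum_mul, Finset.sum_mul]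
  refine (norm_sum_le _ _).trans (Finset.sum_le_sum fun m hm => ?_)
  rw [← mul_sub]
  calc _ ≤ ‖f.coeff m‖ * ((e + 1) * K ^ e * ‖u - v‖) :=
        (norm_mul_le _ _).trans (by gcongr; exact hmonomial m hm)
    _ = _ := by ring

end PolynomialEstimate

section PowerSeries

variable {𝕜 E : Type*} [NormedField 𝕜] [NormedAddCommGroup E] [NormedSpace 𝕜 E]

theorem exists_norm_le_mul_pow_of_summable_pow_smul {b : ℕ → E} {w : 𝕜} (hw : w ≠ 0)
    (h : Summable fun k => w ^ k • b k) : ∃ M, ∀ k, ‖b k‖ ≤ M * ‖w‖⁻¹ ^ k := by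
  obtain ⟨M, hM⟩ := h.tendsto_atTop_zero.norm.bddAbove_range
  refine ⟨M, fun k => ?_⟩
  have hk : ‖w‖ ^ k * ‖b k‖ ≤ M := by simpa [norm_smul] using hM (Set.mem_range_self k)
  calc ‖b k‖ = ‖w‖⁻¹ ^ k * (‖w‖ ^ k * ‖b k‖) := by
        rw [← mul_assoc, ← mul_pow, inv_mul_cancel₀ (norm_ne_zero_iff.mpr hw), one_pow, one_mul]
    _ ≤ ‖w‖⁻¹ ^ k * M := by gcongr
    _ = M * ‖w‖⁻¹ ^ k := mul_comm _ _

theorem norm_pow_smul_le_of_norm_le_mul_pow {b : ℕ → E} {M r : ℝ} (hb : ∀ k, ‖b k‖ ≤ M * r ^ k)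
    (hr : 0 ≤ r) {z : 𝕜} (hz : ‖z‖ * r ≤ 1 / 2) (k : ℕ) : ‖z ^ k • b k‖ ≤ M * (1 / 2) ^ k := by
  have hM : 0 ≤ M := (norm_nonneg _).trans (by simpa using hb 0)
  calc ‖z ^ k • b k‖ = ‖z‖ ^ k * ‖b k‖ := by rw [norm_smul, norm_pow]
    _ ≤ ‖z‖ ^ k * (M * r ^ k) := by gcongr; exact hb k
    _ = M * (‖z‖ * r) ^ k := by ring
    _ ≤ M * (1 / 2) ^ k := by gcongr

theorem exists_eventually_norm_tsum_pow_smul_sub_sum_le [CompleteSpace E] {b : ℕ → E} {w : 𝕜}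
    (hw : w ≠ 0) (h : Summable fun k => w ^ k • b k) (m : ℕ) :
    ∃ A, ∀ᶠ z in 𝓝 (0 : 𝕜), ‖∑' k, z ^ k • b k‖ ≤ A ∧ ‖∑ k ∈ Finset.range m, z ^ k • b k‖ ≤ A ∧
      ‖∑' k, z ^ k • b k - ∑ k ∈ Finset.range m, z ^ k • b k‖ ≤ A * ‖z‖ ^ m := by
  obtain ⟨M, hM⟩ := exists_norm_le_mul_pow_of_summable_pow_smul hw h
  set r := ‖w‖⁻¹
  have hr : 0 ≤ r := inv_nonneg.mpr (norm_nonneg w)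
  have hM0 : 0 ≤ M := (norm_nonneg _).trans (by simpa using hM 0)
  have hshift : ∀ k, ‖b (k + m)‖ ≤ M * r ^ m * r ^ k := fun k => by
    rw [mul_assoc, ← pow_add, add_comm]; exact hM _
  refine ⟨2 * M + 2 * M * r ^ m, ?_⟩
  filter_upwards [Metric.ball_mem_nhds 0 (half_pos (norm_pos_iff.mpr hw))] with z hz
  have hzr : ‖z‖ * r ≤ 1 / 2 := by
    rw [mem_ball_zero_iff] at hz
    rw [← div_eq_mul_inv, div_le_iff₀ (norm_pos_iff.mpr hw)]
    linarith
  have hterm := norm_pow_smul_le_of_norm_le_mul_pow hM hr hzr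
  have htail_eq : ∑' k, z ^ k • b k - ∑ k ∈ Finset.range m, z ^ k • b k
      = z ^ m • ∑' k, z ^ k • b (k + m) := by
    rw [← (summable_geometric_two.mul_left M).of_norm_bounded hterm |>.sum_add_tsum_nat_add m,
      add_sub_cancel_left, ← tsum_const_smul'']
    simp only [pow_add, mul_comm, mul_smul]
  have htail : ‖∑' k, z ^ k • b k - ∑ k ∈ Finset.range m, z ^ k • b k‖
      ≤ 2 * M * r ^ m * ‖z‖ ^ m := by
    rw [htail_eq, norm_smul, norm_pow, mul_comm]
    gcongr
    exact (tsum_of_norm_bounded (hasSum_geometric_two.mul_left (M * r ^ m))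
      (norm_pow_smul_le_of_norm_le_mul_pow hshift hr hzr)).trans_eq (by ring)
  have hr_pow : 0 ≤ 2 * M * r ^ m := by positivity
  refine ⟨?_, ?_, htail.trans (by gcongr; linarith)⟩
  · have := tsum_of_norm_bounded (hasSum_geometric_two.mul_left M) hterm
    linarith
  · calc ‖∑ k ∈ Finset.range m, z ^ k • b k‖ ≤ ∑ k ∈ Finset.range m, M * (1 / 2) ^ k :=
          (norm_sum_le _ _).trans (Finset.sum_le_sum fun k _ => hterm k)
      _ ≤ M * 2 := by rw [← Finset.mul_sum]; gcongr; exact sum_geometric_two_le m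
      _ ≤ _ := by linarith

end PowerSeries

section Laurent

variable {𝕜 E : Type*} [NormedField 𝕜] [NormedAddCommGroup E] [NormedSpace 𝕜 E]

theorem zpow_natCast_sub_natCast_eq_mul_inv_pow {t : 𝕜} (ht : t ≠ 0) (s k : ℕ) :
    t ^ ((s : ℤ) - k) = t ^ s * t⁻¹ ^ k := by
  rw [zpow_sub₀ ht, zpow_natCast, zpow_natCast, div_eq_mul_inv, inv_pow]

theorem hasSum_inv_pow_smul_of_hasSum_zpow_smul {a : ℤ → E} {s : ℕ}
    (hsupp : ∀ i : ℤ, (s : ℤ) < i → a i = 0) {t : 𝕜} (ht : t ≠ 0) {y : E}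
    (h : HasSum (fun i : ℤ => t ^ i • a i) y) :
    HasSum (fun k : ℕ => t⁻¹ ^ k • a (s - k)) ((t ^ s)⁻¹ • y) := by
  have hinj : Function.Injective fun k : ℕ => (s : ℤ) - k := fun k l hkl => by simpa using hkl
  have hrange : ∀ i ∉ Set.range fun k : ℕ => (s : ℤ) - k, t ^ i • a i = 0 := fun i hi => by
    rw [hsupp i (not_le.mp fun his => hi ⟨(s - i).toNat, by simp; omega⟩), smul_zero]
  convert ((hinj.hasSum_iff hrange).mpr h).const_smul (t ^ s)⁻¹ using 1
  ext k : 1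
  rw [Function.comp_apply, smul_smul, zpow_natCast_sub_natCast_eq_mul_inv_pow ht,
    inv_mul_cancel_left₀ (pow_ne_zero _ ht)]

theorem Finset.sum_Icc_sub_natCast_eq_sum_range {M : Type*} [AddCommMonoid M] (g : ℤ → M) (a : ℤ)
    (m : ℕ) : ∑ i ∈ Icc (a - m) a, g i = ∑ k ∈ range (m + 1), g (a - k) :=
  sum_nbij' (fun i => (a - i).toNat) (fun k => a - k) (fun i hi => by simp at hi ⊢; omega)
    (fun k hk => by simp at hk ⊢; omega) (fun i hi => by simp at hi ⊢; omega) (fun k _ => by simp)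
    (fun i hi => by simp at hi ⊢; congr; omega)

theorem sum_Icc_zpow_smul_eq_pow_smul_sum_range {a : ℤ → E} {t : 𝕜} (ht : t ≠ 0) (s m : ℕ) :
    ∑ i ∈ Finset.Icc ((s : ℤ) - m) s, t ^ i • a i
      = t ^ s • ∑ k ∈ Finset.range (m + 1), t⁻¹ ^ k • a (s - k) := by
  simp only [Finset.sum_Icc_sub_natCast_eq_sum_range, Finset.smul_sum, smul_smul,
    zpow_natCast_sub_natCast_eq_mul_inv_pow ht]

end Laurent

theorem MvPolynomial.tendsto_eval_smul_sub_eval_smul_cobounded {𝕜 σ : Type*}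
    [NontriviallyNormedField 𝕜] [Fintype σ] {f : MvPolynomial σ 𝕜} {e s : ℕ}
    (hf : f.totalDegree ≤ e + 1) {g p : 𝕜 → σ → 𝕜} {A : ℝ}
    (hgp : ∀ᶠ z in 𝓝 0, ‖g z‖ ≤ A ∧ ‖p z‖ ≤ A ∧ ‖g z - p z‖ ≤ A * ‖z‖ ^ ((e + 1) * s + 1)) :
    Tendsto (fun t => eval (t ^ s • g t⁻¹) f - eval (t ^ s • p t⁻¹) f)
      (Bornology.cobounded 𝕜) (𝓝 0) := by
  obtain ⟨C, hC0, hC⟩ := exists_norm_eval_sub_eval_le hf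
  set A' := max A 1
  have hbound : ∀ᶠ t in Bornology.cobounded 𝕜,
      ‖eval (t ^ s • g t⁻¹) f - eval (t ^ s • p t⁻¹) f‖ ≤ C * A' ^ e * A * ‖t‖⁻¹ := by
    filter_upwards [tendsto_inv₀_cobounded.eventually hgp,
      tendsto_norm_cobounded_atTop.eventually_ge_atTop 1] with t ⟨hg, hp, hdiff⟩ ht
    have ht0 : t ≠ 0 := norm_pos_iff.mp (by linarith)
    have hK : 1 ≤ A' * ‖t‖ ^ s := one_le_mul_of_one_le_of_one_le (le_max_right _ _) (one_le_pow₀ ht)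
    have hnorm : ∀ y : σ → 𝕜, ‖y‖ ≤ A → ‖t ^ s • y‖ ≤ A' * ‖t‖ ^ s := fun y hy => by
      rw [norm_smul, norm_pow, mul_comm]
      gcongr
      exact hy.trans (le_max_left _ _)
    calc _ ≤ C * (A' * ‖t‖ ^ s) ^ e * ‖t ^ s • g t⁻¹ - t ^ s • p t⁻¹‖ :=
          hC _ hK _ _ (hnorm _ hg) (hnorm _ hp)
      _ ≤ C * (A' * ‖t‖ ^ s) ^ e * (‖t‖ ^ s * (A * ‖t⁻¹‖ ^ ((e + 1) * s + 1))) := by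
          rw [← smul_sub, norm_smul, norm_pow]
          gcongr
      _ = C * A' ^ e * A * ‖t‖⁻¹ := by
          have : ‖t‖ ≠ 0 := norm_ne_zero_iff.mpr ht0
          rw [norm_inv, inv_pow, mul_pow, ← pow_mul, add_mul, one_mul, pow_succ, pow_add,
            mul_comm s]
          field_simp
  refine squeeze_zero_norm' hbound ?_
  simpa using (tendsto_inv_atTop_zero.comp tendsto_norm_cobounded_atTop).const_mul (C * A' ^ e * A)

theorem truncation_complex_general {n : ℕ} (s : ℕ) (R : ℝ)
    (a : ℤ → Fin n → ℂ) (x : ℂ → Fin n → ℂ)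
    (hsupp : ∀ i : ℤ, (s : ℤ) < i → a i = 0)
    (hconv : ∀ t : ℂ, R < ‖t‖ → HasSum (fun i : ℤ => t ^ i • a i) (x t))
    (f : MvPolynomial (Fin n) ℂ) (d : ℕ) (hd : f.totalDegree = d)
    (b : ℂ)
    (hlim : Tendsto (fun t => MvPolynomial.eval (x t) f) (Filter.comap norm Filter.atTop) (nhds b)) :
    Tendsto
      (fun t : ℂ => MvPolynomial.eval
        (fun j => ∑ i ∈ Finset.Icc (-(((d : ℤ) - 1) * s)) (s : ℤ), t ^ i * a i j) f)
      (Filter.comap norm Filter.atTop) (nhds b) := by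
  obtain rfl | ⟨e, rfl⟩ : d = 0 ∨ ∃ e, d = e + 1 := by cases d <;> simp
  · rw [totalDegree_eq_zero_iff_eq_C.mp hd] at hlim ⊢
    simpa using hlim
  have hx : ∀ t : ℂ, max R 0 < ‖t‖ →
      HasSum (fun k : ℕ => t⁻¹ ^ k • a (s - k)) ((t ^ s)⁻¹ • x t) := fun t ht =>
    hasSum_inv_pow_smul_of_hasSum_zpow_smul hsupp
      (norm_pos_iff.mp ((le_max_right R 0).trans_lt ht)) (hconv t ((le_max_left R 0).trans_lt ht))
  have htrunc : ∀ t : ℂ, t ≠ 0 →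
      (fun j => ∑ i ∈ Finset.Icc (-((((e + 1 : ℕ) : ℤ) - 1) * s)) (s : ℤ), t ^ i * a i j)
        = t ^ s • ∑ k ∈ Finset.range ((e + 1) * s + 1), t⁻¹ ^ k • a (s - k) := fun t ht => by
    rw [show -((((e + 1 : ℕ) : ℤ) - 1) * s) = s - ((e + 1) * s : ℕ) by push_cast; ring,
      ← sum_Icc_zpow_smul_eq_pow_smul_sum_range ht]
    ext j
    simp [Finset.sum_apply]
  obtain ⟨t₀, ht₀⟩ := NormedField.exists_lt_norm ℂ (max R 0)
  obtain ⟨A, hA⟩ := exists_eventually_norm_tsum_pow_smul_sub_sum_le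
    (inv_ne_zero (norm_pos_iff.mp ((le_max_right R 0).trans_lt ht₀))) (hx t₀ ht₀).summable
    ((e + 1) * s + 1)
  rw [comap_norm_atTop] at hlim ⊢
  have hclose := hlim.sub (tendsto_eval_smul_sub_eval_smul_cobounded hd.le hA)
  rw [sub_zero] at hclose
  refine hclose.congr' ?_
  filter_upwards [tendsto_norm_cobounded_atTop.eventually_gt_atTop (max R 0)] with t ht
  have ht0 : t ≠ 0 := norm_pos_iff.mp ((le_max_right R 0).trans_lt ht)
  rw [htrunc t ht0, (hx t ht).tsum_eq, smul_inv_smul₀ (pow_ne_zero _ ht0), sub_sub_cancel]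

/-- **Truncation lemma (complex case).**  If a holomorphic curve has a parametrization
`x(t) = ∑_{i ≤ s} aᵢ tⁱ` for `|t| > R` (a convergent Laurent series with finitely many
positive-power terms), `f : ℂⁿ → ℂ` is a polynomial of degree `d`, and
`f(x(t)) → b` as `t → ∞`, then the truncated arc
`x̃(t) = ∑_{-(d-1)s ≤ i ≤ s} aᵢ tⁱ` satisfies `f(x̃(t)) → b` as well. -/
theorem truncation_complex {n : ℕ} (s : ℕ) (R : ℝ)
    (a : ℤ → Fin n → ℂ) (x : ℂ → Fin n → ℂ)
    (hsupp : ∀ i : ℤ, (s : ℤ) < i → a i = 0)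
    (hconv : ∀ t : ℂ, R < ‖t‖ → HasSum (fun i : ℤ => t ^ i • a i) (x t))
    (hpos : ∃ i : ℤ, 0 < i ∧ a i ≠ 0)
    (f : MvPolynomial (Fin n) ℂ) (d : ℕ) (hd : f.totalDegree = d)
    (b : ℂ)
    (hlim : Tendsto (fun t => MvPolynomial.eval (x t) f) (Filter.comap norm Filter.atTop) (nhds b)) :
    Tendsto
      (fun t : ℂ => MvPolynomial.eval
        (fun j => ∑ i ∈ Finset.Icc (-(((d : ℤ) - 1) * s)) (s : ℤ), t ^ i * a i j) f)
      (Filter.comap norm Filter.atTop) (nhds b) :=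
  truncation_complex_general s R a x hsupp hconv f d hd b hlim
end

section
/- The same truncation statement holds over the reals: if a real analytic curve has parametrization x(t) = Σ_{i ≤ s} a_i t^i for |t| > R with t ∈ ℝ, a_i ∈ ℝⁿ, Σ_{i>0}|a_i| > 0, s ≥ 0 an integer, and f: ℝⁿ → ℝ is a polynomial of degree d with lim_{t→∞} f(x(t)) = b ∈ ℝ, then setting x̃(t) = Σ_{−(d−1)s ≤ i ≤ s} a_i t^i one has lim_{t→∞} f(x̃(t)) = b. -/
open Filter MvPolynomial


lemma lemA (b : ℤ → ℝ) (hb : ∀ i : ℤ, 0 < i → b i = 0) (T : ℝ) (φ : ℝ → ℝ)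
    (hφ : ∀ t : ℝ, T < t → HasSum (fun i : ℤ => t ^ i * b i) (φ t)) :
    Tendsto φ atTop (nhds (b 0)) := by
  set t₀ : ℝ := max T 0 + 1 with ht₀def
  have ht₀T : T < t₀ := lt_of_le_of_lt (le_max_left T 0) (lt_add_one _)
  have ht₀1 : (1:ℝ) ≤ t₀ := le_add_of_nonneg_left (le_max_right T 0)
  have ht₀0 : (0:ℝ) < t₀ := lt_of_lt_of_le one_pos ht₀1
  have hsum0 := hφ t₀ ht₀T
  have hsabs : Summable (fun i : ℤ => |t₀ ^ i * b i|) := hsum0.summable.abs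
  set C : ℝ := ∑' i : ℤ, |t₀ ^ i * b i| with hC
  have hC0 : 0 ≤ C := tsum_nonneg (fun i => abs_nonneg _)
  have hCle : ∀ i : ℤ, |t₀ ^ i * b i| ≤ C := fun i =>
    Summable.le_tsum hsabs i (fun j _ => abs_nonneg _)
  have hbb : ∀ i : ℤ, |b i| ≤ C * t₀ ^ (-i) := by
    intro i
    have h1 : t₀ ^ i * |b i| ≤ C := by
      have := hCle i
      rwa [abs_mul, abs_of_pos (zpow_pos ht₀0 i)] at this
    have h2 : (0:ℝ) < t₀ ^ i := zpow_pos ht₀0 i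
    rw [zpow_neg, ← div_eq_mul_inv, le_div_iff₀ h2]
    linarith [h1]
  -- key bound for t > 2 * t₀
  have key : ∀ t : ℝ, 2 * t₀ < t → |φ t - b 0| ≤ 2 * C * t₀ / t := by
    intro t ht
    have ht0 : (0:ℝ) < t := lt_trans (by linarith) ht
    set ρ : ℝ := t₀ / t with hρ
    have hρ0 : 0 ≤ ρ := div_nonneg ht₀0.le ht0.le
    have hρhalf : ρ < 1/2 := by
      rw [hρ, div_lt_iff₀ ht0]; linarith
    have hρ1 : ρ < 1 := by linarith
    have hTt : T < t := by linarith
    have hst := (hφ t hTt).sub (hasSum_ite_eq (0:ℤ) (b 0))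
    set g : ℤ → ℝ := fun i => t ^ i * b i - (if i = 0 then b 0 else 0) with hg
    set ψ : ℤ → ℝ := fun i => if i < 0 then C * ρ ^ (-i).toNat else 0 with hψ
    have hgψ : ∀ i : ℤ, |g i| ≤ ψ i := by
      intro i
      rcases lt_trichotomy i 0 with hi | hi | hi
      · simp only [hg, hψ, if_pos hi, if_neg hi.ne]
        rw [sub_zero, abs_mul, abs_of_pos (zpow_pos ht0 i)]
        calc t ^ i * |b i| ≤ t ^ i * (C * t₀ ^ (-i)) :=
              mul_le_mul_of_nonneg_left (hbb i) (zpow_pos ht0 i).le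
          _ = C * ρ ^ (-i).toNat := by
              rw [hρ, div_pow,
                ← zpow_natCast t₀ (-i).toNat, ← zpow_natCast t (-i).toNat,
                Int.toNat_of_nonneg (by omega : (0:ℤ) ≤ -i)]
              have htne : t ^ (-i) ≠ 0 := (zpow_pos ht0 (-i)).ne'
              field_simp
              have htt : t ^ i * t ^ (-i) = 1 := by
                rw [← zpow_add₀ ht0.ne', add_neg_cancel, zpow_zero]
              linear_combination C * htt
      · simp [hg, hψ, hi]
      · simp only [hg, hψ, if_neg hi.ne', if_neg (not_lt.mpr hi.le), hb i hi]
        simp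
    have hψsum : HasSum ψ (C * ρ * (1 - ρ)⁻¹) := by
      have hgeo : HasSum (fun k : ℕ => (C * ρ) * ρ ^ k) (C * ρ * (1 - ρ)⁻¹) :=
        (hasSum_geometric_of_lt_one hρ0 hρ1).mul_left _
      have hinj : Function.Injective (fun k : ℕ => (-(k:ℤ) - 1)) := by
        intro a b h; simpa using h
      refine (Function.Injective.hasSum_iff hinj ?_).mp ?_
      · intro i hi
        simp only [hψ, ite_eq_right_iff]
        intro hi0
        exfalso
        exact hi ⟨(-i-1).toNat, by simp only []; omega⟩
      · have : (ψ ∘ fun k : ℕ => (-(k:ℤ) - 1)) = fun k : ℕ => (C * ρ) * ρ ^ k := by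
          funext k
          simp only [Function.comp, hψ, if_pos (by omega : -(k:ℤ) - 1 < 0)]
          have : (-(-(k:ℤ) - 1)).toNat = k + 1 := by omega
          rw [this, pow_succ]
          ring
        rw [this]
        exact hgeo
    have hgsum : Summable fun i => |g i| :=
      Summable.of_nonneg_of_le (fun i => abs_nonneg _) hgψ hψsum.summable
    have h1 : |φ t - b 0| ≤ ∑' i, |g i| := by
      have := norm_tsum_le_tsum_norm (f := g) (by simpa [Real.norm_eq_abs] using hgsum)
      rw [hst.tsum_eq] at this
      simpa [Real.norm_eq_abs] using this
    have h2 : (∑' i, |g i|) ≤ C * ρ * (1 - ρ)⁻¹ := by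
      rw [← hψsum.tsum_eq]
      exact Summable.tsum_le_tsum hgψ hgsum hψsum.summable
    have h3 : C * ρ * (1 - ρ)⁻¹ ≤ 2 * C * t₀ / t := by
      have hinv : (1 - ρ)⁻¹ ≤ 2 := by
        rw [inv_le_comm₀ (by linarith) (by norm_num)]
        linarith
      calc C * ρ * (1 - ρ)⁻¹ ≤ C * ρ * 2 :=
            mul_le_mul_of_nonneg_left hinv (by positivity)
        _ = 2 * C * t₀ / t := by rw [hρ]; ring
    linarith [h1, h2, h3]
  -- conclude
  have hdiff : Tendsto (fun t => φ t - b 0) atTop (nhds 0) := by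
    refine squeeze_zero_norm' (f := fun t => φ t - b 0) (a := fun t => 2 * C * t₀ / t) ?_ ?_
    · filter_upwards [eventually_gt_atTop (2 * t₀)] with t ht
      simpa [Real.norm_eq_abs] using key t ht
    · simpa [div_eq_mul_inv] using tendsto_inv_atTop_zero.const_mul (2 * C * t₀)
  have := hdiff.add_const (b 0)
  simpa using this


lemma contDiff_eval {n : ℕ} (f : MvPolynomial (Fin n) ℝ) :
    ContDiff ℝ (⊤ : ℕ∞) (fun p : Fin n → ℝ => eval p f) := by
  induction f using MvPolynomial.induction_on with
  | C a => simpa using contDiff_const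
  | add f g hf hg => simpa using hf.add hg
  | mul_X f i hf =>
      simp only [map_mul, eval_X]
      exact hf.mul ((ContinuousLinearMap.proj i (R := ℝ) (φ := fun _ : Fin n => ℝ)).contDiff)

lemma eval_smul_homog {n : ℕ} {f : MvPolynomial (Fin n) ℝ} {k : ℕ}
    (hf : f.IsHomogeneous k) (c : ℝ) (w : Fin n → ℝ) :
    eval (c • w) f = c ^ k * eval w f := by
  rw [eval_eq, eval_eq, Finset.mul_sum]
  refine Finset.sum_congr rfl fun m hm => ?_
  have hdeg : ∑ j ∈ m.support, m j = k := by
    have := hf (mem_support_iff.mp hm)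
    simpa [Finsupp.degree, Finsupp.weight, Finsupp.linearCombination, Finsupp.sum] using this
  simp only [Pi.smul_apply, smul_eq_mul, mul_pow, Finset.prod_mul_distrib,
    Finset.prod_pow_eq_pow_sum, hdeg]
  ring


/-- **Truncation lemma (real case).**  If a real analytic curve has a parametrization
`x(t) = ∑_{i ≤ s} aᵢ tⁱ` for `|t| > R` (convergent, finitely many positive-power terms),
`f : ℝⁿ → ℝ` is a polynomial of degree `d`, and `f(x(t)) → b` as `t → ∞`, then the
truncated arc `x̃(t) = ∑_{-(d-1)s ≤ i ≤ s} aᵢ tⁱ` satisfies `f(x̃(t)) → b` as well. -/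
theorem truncation_real {n : ℕ} (s : ℕ) (R : ℝ)
    (a : ℤ → Fin n → ℝ) (x : ℝ → Fin n → ℝ)
    (hsupp : ∀ i : ℤ, (s : ℤ) < i → a i = 0)
    (hconv : ∀ t : ℝ, R < |t| → HasSum (fun i : ℤ => t ^ i • a i) (x t))
    (hpos : ∃ i : ℤ, 0 < i ∧ a i ≠ 0)
    (f : MvPolynomial (Fin n) ℝ) (d : ℕ) (hd : f.totalDegree = d)
    (b : ℝ)
    (hlim : Tendsto (fun t => MvPolynomial.eval (x t) f) Filter.atTop (nhds b)) :
    Tendsto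
      (fun t : ℝ => MvPolynomial.eval
        (fun j => ∑ i ∈ Finset.Icc (-(((d : ℤ) - 1) * s)) (s : ℤ), t ^ i * a i j) f)
      Filter.atTop (nhds b) := by
  clear hpos
  set N : ℕ := d * s with hNdef
  set T₁ : ℝ := max R 1 with hT₁def
  -- basic facts about t > T₁
  have hT₁ : ∀ t : ℝ, T₁ < t → (0 < t ∧ 1 < t ∧ R < |t|) := by
    intro t ht
    have h1 : (1:ℝ) < t := lt_of_le_of_lt (le_max_right R 1) ht
    have h0 : (0:ℝ) < t := lt_trans one_pos h1
    exact ⟨h0, h1, by rw [abs_of_pos h0]; exact lt_of_le_of_lt (le_max_left R 1) ht⟩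
  set H : ℝ → Fin n → ℝ := fun t j => t ^ (-(s:ℤ)) * x t j with hHdef
  set Ht : ℝ → Fin n → ℝ :=
    fun t j => ∑ i ∈ Finset.Icc (-(((d : ℤ) - 1) * s)) (s : ℤ), t ^ (i - (s:ℤ)) * a i j
    with hHtdef
  -- coordinatewise HasSum
  have hx : ∀ t : ℝ, T₁ < t → ∀ j, HasSum (fun i : ℤ => t ^ i * a i j) (x t j) := by
    intro t ht j
    have := (Pi.hasSum.mp (hconv t (hT₁ t ht).2.2)) j
    simpa using this
  -- HasSum for H
  have hH : ∀ t : ℝ, T₁ < t → ∀ j,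
      HasSum (fun i : ℤ => t ^ i * a (i + s) j) (H t j) := by
    intro t ht j
    have htne : t ≠ 0 := (hT₁ t ht).1.ne'
    have h1 := (hx t ht j).mul_left (t ^ (-(s:ℤ)))
    have h2 := (Equiv.hasSum_iff (Equiv.addRight (s:ℤ))).mpr h1
    have heq : ((fun i : ℤ => t ^ (-(s:ℤ)) * (t ^ i * a i j)) ∘ (Equiv.addRight (s:ℤ)))
        = fun i : ℤ => t ^ i * a (i + s) j := by
      funext i
      simp only [Function.comp, Equiv.coe_addRight]
      rw [← mul_assoc, ← zpow_add₀ htne]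
      congr 2
      ring
    rwa [heq] at h2
  -- tendsto of H coordinates
  have hHtend : ∀ j, Tendsto (fun t => H t j) atTop (nhds (a s j)) := by
    intro j
    have := lemA (fun i => a (i + s) j)
      (fun i hi => congrFun (hsupp (i + s) (by omega)) j) T₁ (fun t => H t j)
      (fun t ht => hH t ht j)
    simpa using this
  -- truncated coefficients
  set b' : Fin n → ℤ → ℝ :=
    fun j i => if i ∈ Finset.Icc (-(N:ℤ)) 0 then 0 else a (i + s) j with hb'def
  have hb'zero : ∀ j, ∀ m : ℤ, -(N:ℤ) ≤ m → b' j m = 0 := by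
    intro j m hm
    by_cases hm0 : m ≤ 0
    · simp [hb'def, Finset.mem_Icc, hm, hm0]
    · have : a (m + s) = 0 := hsupp (m + s) (by omega)
      simp [hb'def, Finset.mem_Icc, hm0, this]
  -- Icc reindexing
  have hIcc : Finset.Icc (-(((d : ℤ) - 1) * s)) (s : ℤ)
      = (Finset.Icc (-(N:ℤ)) 0).map (addRightEmbedding (s:ℤ)) := by
    rw [Finset.map_add_right_Icc]
    congr 1
    · push_cast [hNdef]; ring
    · simp
  have hHt_eq : ∀ t : ℝ, ∀ j,
      Ht t j = ∑ i ∈ Finset.Icc (-(N:ℤ)) 0, t ^ i * a (i + s) j := by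
    intro t j
    rw [hHtdef]
    simp only []
    rw [hIcc, Finset.sum_map]
    refine Finset.sum_congr rfl fun i _ => ?_
    simp [addRightEmbedding, add_sub_cancel_right]
  -- HasSum for difference H - Ht
  have hDiff : ∀ t : ℝ, T₁ < t → ∀ j,
      HasSum (fun i : ℤ => t ^ i * b' j i) (H t j - Ht t j) := by
    intro t ht j
    have hχ : HasSum
        (fun i : ℤ => if i ∈ Finset.Icc (-(N:ℤ)) 0 then t ^ i * a (i + s) j else 0)
        (Ht t j) := by
      rw [hHt_eq t j]
      have := hasSum_sum_of_ne_finset_zero (L := SummationFilter.unconditional ℤ) (s := Finset.Icc (-(N:ℤ)) 0)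
        (f := fun i : ℤ => if i ∈ Finset.Icc (-(N:ℤ)) 0 then t ^ i * a (i + s) j else 0)
        (fun i hi => if_neg hi)
      rwa [Finset.sum_ite_of_true (fun i hi => hi)] at this
    have h1 := (hH t ht j).sub hχ
    have heq : (fun i : ℤ => t ^ i * a (i + s) j -
        (if i ∈ Finset.Icc (-(N:ℤ)) 0 then t ^ i * a (i + s) j else 0))
        = fun i : ℤ => t ^ i * b' j i := by
      funext i
      simp only [hb'def]
      by_cases hi : i ∈ Finset.Icc (-(N:ℤ)) 0
      · rw [if_pos hi, if_pos hi, sub_self, mul_zero]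
      · rw [if_neg hi, if_neg hi, sub_zero]
    rwa [heq] at h1
  -- HasSum for shifted difference
  have hShift : ∀ t : ℝ, T₁ < t → ∀ j,
      HasSum (fun i : ℤ => t ^ i * b' j (i - ((N:ℤ) + 1)))
        (t ^ ((N:ℤ) + 1) * (H t j - Ht t j)) := by
    intro t ht j
    have htne : t ≠ 0 := (hT₁ t ht).1.ne'
    have h1 := (hDiff t ht j).mul_left (t ^ ((N:ℤ) + 1))
    have h2 := (Equiv.hasSum_iff (Equiv.subRight ((N:ℤ) + 1))).mpr h1
    have heq : ((fun i : ℤ => t ^ ((N:ℤ) + 1) * (t ^ i * b' j i)) ∘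
        (Equiv.subRight ((N:ℤ) + 1)))
        = fun i : ℤ => t ^ i * b' j (i - ((N:ℤ) + 1)) := by
      funext i
      simp only [Function.comp, Equiv.subRight_apply]
      rw [← mul_assoc, ← zpow_add₀ htne]
      congr 2
      ring
    rwa [heq] at h2
  -- limit of shifted difference
  have hShiftTend : ∀ j, Tendsto (fun t => t ^ ((N:ℤ) + 1) * (H t j - Ht t j)) atTop
      (nhds (b' j (0 - ((N:ℤ) + 1)))) := by
    intro j
    refine lemA (fun i => b' j (i - ((N:ℤ) + 1))) (fun i hi => ?_) T₁ _
      (fun t ht => hShift t ht j)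
    exact hb'zero j _ (by omega)
  -- diff times t^N tends to 0
  have hDiffN : ∀ j, Tendsto (fun t => t ^ (N:ℤ) * (H t j - Ht t j)) atTop (nhds 0) := by
    intro j
    have h1 := (tendsto_inv_atTop_zero (𝕜 := ℝ)).mul (hShiftTend j)
    rw [zero_mul] at h1
    refine h1.congr' ?_
    filter_upwards [eventually_gt_atTop (0:ℝ)] with t ht
    rw [← mul_assoc, ← zpow_neg_one, ← zpow_add₀ ht.ne']
    congr 2
    ring
  -- diff tends to 0
  have hDiff0 : ∀ j, Tendsto (fun t => H t j - Ht t j) atTop (nhds 0) := by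
    intro j
    have h1 := (tendsto_zpow_atTop_zero (by omega : -((N:ℤ) + 1) < 0)).mul (hShiftTend j)
    rw [zero_mul] at h1
    refine h1.congr' ?_
    filter_upwards [eventually_gt_atTop (0:ℝ)] with t ht
    rw [← mul_assoc, ← zpow_add₀ ht.ne']
    have h2 : ∀ m : ℤ, m = 0 → t ^ m * (H t j - Ht t j) = H t j - Ht t j :=
      fun m hm => by rw [hm, zpow_zero, one_mul]
    exact h2 _ (by omega)
  -- Ht coordinates tend to a s j
  have hHttend : ∀ j, Tendsto (fun t => Ht t j) atTop (nhds (a s j)) := by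
    intro j
    have := (hHtend j).sub (hDiff0 j)
    rw [sub_zero] at this
    refine this.congr fun t => by ring
  have hHpi : Tendsto H atTop (nhds (a s)) := tendsto_pi_nhds.mpr hHtend
  have hHtpi : Tendsto Ht atTop (nhds (a s)) := tendsto_pi_nhds.mpr hHttend
  -- sum of |t^N * diff| tends to 0
  set dd : ℝ → ℝ := fun t => ∑ j : Fin n, |t ^ (N:ℤ) * (H t j - Ht t j)| with hdddef
  have hdd : Tendsto dd atTop (nhds 0) := by
    have : Tendsto dd atTop (nhds (∑ j : Fin n, |(0:ℝ)|)) :=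
      tendsto_finset_sum _ (fun j _ => ((hDiffN j).abs))
    simpa using this
  -- each homogeneous term tends to 0
  have hterm : ∀ k ∈ Finset.range (d + 1), Tendsto
      (fun t : ℝ => t ^ ((k * s : ℕ) : ℤ) *
        (eval (Ht t) (homogeneousComponent k f) - eval (H t) (homogeneousComponent k f)))
      atTop (nhds 0) := by
    intro k hk
    have hk' : k ≤ d := by simpa using Nat.lt_succ_iff.mp (Finset.mem_range.mp hk)
    obtain ⟨K, U, hU, hlipk⟩ :=
      ((contDiff_eval (homogeneousComponent k f)).contDiffAt
        (x := a s)).of_le (mod_cast le_top) |>.exists_lipschitzOnWith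
    refine squeeze_zero_norm' (a := fun t => (K:ℝ) * dd t) ?_
      (by simpa using hdd.const_mul (K:ℝ))
    filter_upwards [eventually_gt_atTop (1:ℝ), hHpi.eventually_mem hU,
      hHtpi.eventually_mem hU] with t ht1 hme1 hme2
    have ht0 : (0:ℝ) < t := lt_trans one_pos ht1
    set fk := homogeneousComponent k f with hfk
    have hdist : dist (eval (Ht t) fk) (eval (H t) fk) ≤ (K:ℝ) * dist (Ht t) (H t) :=
      hlipk.dist_le_mul _ hme2 _ hme1
    have hdistpi : dist (Ht t) (H t) ≤ ∑ j : Fin n, |H t j - Ht t j| := by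
      refine (dist_pi_le_iff (Finset.sum_nonneg fun j _ => abs_nonneg _)).mpr fun j => ?_
      rw [Real.dist_eq, abs_sub_comm]
      exact Finset.single_le_sum (f := fun j' => |H t j' - Ht t j'|)
        (fun j' _ => abs_nonneg _) (Finset.mem_univ j)
    have hpow : t ^ ((k * s : ℕ) : ℤ) ≤ t ^ ((N : ℕ) : ℤ) :=
      zpow_le_zpow_right₀ ht1.le (by exact_mod_cast Nat.mul_le_mul_right s hk')
    have hpow0 : (0:ℝ) < t ^ ((k * s : ℕ) : ℤ) := zpow_pos ht0 _
    have hddt : dd t = t ^ ((N : ℕ) : ℤ) * ∑ j : Fin n, |H t j - Ht t j| := by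
      rw [hdddef, Finset.mul_sum]
      exact Finset.sum_congr rfl fun j _ => by
        rw [abs_mul, abs_of_pos (zpow_pos ht0 _)]
    have hstep : |eval (Ht t) fk - eval (H t) fk| = dist (eval (Ht t) fk) (eval (H t) fk) :=
      (Real.dist_eq _ _).symm
    calc ‖t ^ ((k * s : ℕ) : ℤ) * (eval (Ht t) fk - eval (H t) fk)‖
        = t ^ ((k * s : ℕ) : ℤ) * |eval (Ht t) fk - eval (H t) fk| := by
          rw [Real.norm_eq_abs, abs_mul, abs_of_pos hpow0]
      _ ≤ t ^ ((k * s : ℕ) : ℤ) * ((K:ℝ) * dist (Ht t) (H t)) := by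
          rw [hstep]; exact mul_le_mul_of_nonneg_left hdist hpow0.le
      _ ≤ t ^ ((N : ℕ) : ℤ) * ((K:ℝ) * dist (Ht t) (H t)) :=
          mul_le_mul_of_nonneg_right hpow (by positivity)
      _ ≤ t ^ ((N : ℕ) : ℤ) * ((K:ℝ) * ∑ j : Fin n, |H t j - Ht t j|) := by
          refine mul_le_mul_of_nonneg_left ?_ (zpow_pos ht0 _).le
          exact mul_le_mul_of_nonneg_left hdistpi K.2
      _ = (K:ℝ) * dd t := by rw [hddt]; ring
  -- final assembly
  have hfin : Tendsto (fun t : ℝ => eval (x t) f +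
      ∑ k ∈ Finset.range (d + 1), t ^ ((k * s : ℕ) : ℤ) *
        (eval (Ht t) (homogeneousComponent k f) - eval (H t) (homogeneousComponent k f)))
      atTop (nhds b) := by
    have h2 : Tendsto (fun t : ℝ => ∑ k ∈ Finset.range (d + 1), t ^ ((k * s : ℕ) : ℤ) *
        (eval (Ht t) (homogeneousComponent k f) - eval (H t) (homogeneousComponent k f)))
        atTop (nhds 0) := by
      have := tendsto_finset_sum (Finset.range (d + 1)) hterm
      simpa using this
    simpa using hlim.add h2
  refine hfin.congr' ?_
  filter_upwards [eventually_gt_atTop T₁] with t ht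
  obtain ⟨ht0, ht1, htR⟩ := hT₁ t ht
  have htne : t ≠ 0 := ht0.ne'
  have hf : ∑ k ∈ Finset.range (d + 1), homogeneousComponent k f = f := by
    rw [← hd]; exact sum_homogeneousComponent f
  have hzc : ∀ k : ℕ, (t ^ ((s:ℕ) : ℤ)) ^ k = t ^ ((k * s : ℕ) : ℤ) := by
    intro k
    rw [← zpow_natCast (t ^ ((s:ℕ) : ℤ)) k, ← zpow_mul]
    congr 1
    push_cast
    ring
  have hxH : x t = (t ^ ((s:ℕ) : ℤ)) • H t := by
    funext j
    simp only [hHdef, Pi.smul_apply, smul_eq_mul]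
    rw [← mul_assoc, ← zpow_add₀ htne, add_neg_cancel, zpow_zero, one_mul]
  have hx2 : (fun j => ∑ i ∈ Finset.Icc (-(((d : ℤ) - 1) * s)) (s : ℤ), t ^ i * a i j)
      = (t ^ ((s:ℕ) : ℤ)) • Ht t := by
    funext j
    simp only [hHtdef, Pi.smul_apply, smul_eq_mul, Finset.mul_sum]
    refine Finset.sum_congr rfl fun i _ => ?_
    rw [← mul_assoc, ← zpow_add₀ htne]
    congr 2
    ring
  have hevalx : eval (x t) f = ∑ k ∈ Finset.range (d + 1),
      t ^ ((k * s : ℕ) : ℤ) * eval (H t) (homogeneousComponent k f) := by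
    conv_lhs => rw [← hf]
    rw [map_sum]
    refine Finset.sum_congr rfl fun k _ => ?_
    rw [hxH, eval_smul_homog (homogeneousComponent_isHomogeneous k f), hzc]
  have hevalx2 : eval (fun j => ∑ i ∈ Finset.Icc (-(((d : ℤ) - 1) * s)) (s : ℤ),
      t ^ i * a i j) f = ∑ k ∈ Finset.range (d + 1),
      t ^ ((k * s : ℕ) : ℤ) * eval (Ht t) (homogeneousComponent k f) := by
    conv_lhs => rw [← hf]
    rw [map_sum]
    refine Finset.sum_congr rfl fun k _ => ?_
    rw [hx2, eval_smul_homog (homogeneousComponent_isHomogeneous k f), hzc]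
  rw [hevalx, hevalx2, ← Finset.sum_add_distrib]
  exact Finset.sum_congr rfl fun k _ => by ring
end

section
/- For the real polynomial f: ℝ² → ℝ, f(x,y) = x(x²+1)², the set of asymptotic critical values K_∞(f) is empty. -/
/-!
The derivative of `x ↦ x (x² + 1)²` is `(x² + 1)(5x² + 1) ≥ 1`, so the differential of
`f(x, y) = x (x² + 1)²` has norm at least `1` everywhere. Along any sequence going to infinity,
`‖x_ν‖ · ‖df(x_ν)‖ ≥ ‖x_ν‖ → ∞`, so it never tends to `0`.
-/

open Filter Topology

theorem not_tendsto_norm_mul_norm_fderiv_nhds_zero {E F ι : Type*}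
    [NormedAddCommGroup E] [NormedSpace ℝ E] [NormedAddCommGroup F] [NormedSpace ℝ F]
    {l : Filter ι} [l.NeBot] {f : E → F} (hf : ∀ x, 1 ≤ ‖fderiv ℝ f x‖) {u : ι → E}
    (hu : Tendsto (fun i => ‖u i‖) l atTop) :
    ¬ Tendsto (fun i => ‖u i‖ * ‖fderiv ℝ f (u i)‖) l (𝓝 0) := by
  have hge : ∀ i, ‖u i‖ ≤ ‖u i‖ * ‖fderiv ℝ f (u i)‖ := fun i =>
    le_mul_of_one_le_right (norm_nonneg _) (hf (u i))
  exact not_tendsto_nhds_of_tendsto_atTop (tendsto_atTop_mono hge hu) 0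

theorem norm_fderiv_comp_fst {F : Type*} [NormedAddCommGroup F] [NormedSpace ℝ F]
    {g : ℝ → ℝ} {g' : ℝ} {p : ℝ × F} (hg : HasDerivAt g g' p.1) :
    ‖fderiv ℝ (fun q : ℝ × F => g q.1) p‖ = |g'| := by
  have h : HasFDerivAt (fun q : ℝ × F => g q.1) (g' • ContinuousLinearMap.fst ℝ ℝ F) p :=
    hg.comp_hasFDerivAt p hasFDerivAt_fst
  rw [h.fderiv, norm_smul, ContinuousLinearMap.norm_fst, mul_one, Real.norm_eq_abs]

theorem hasDerivAt_mul_sq_add_one_sq (x : ℝ) :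
    HasDerivAt (fun x : ℝ => x * (x ^ 2 + 1) ^ 2) ((x ^ 2 + 1) * (5 * x ^ 2 + 1)) x :=
  ((hasDerivAt_id' x).fun_mul (((hasDerivAt_pow 2 x).add_const 1).fun_pow 2)).congr_deriv
    (by norm_num; ring)

theorem one_le_norm_fderiv_mul_sq_add_one_sq (p : ℝ × ℝ) :
    1 ≤ ‖fderiv ℝ (fun p : ℝ × ℝ => p.1 * (p.1 ^ 2 + 1) ^ 2) p‖ := by
  rw [norm_fderiv_comp_fst (hasDerivAt_mul_sq_add_one_sq p.1)]
  exact (by nlinarith [sq_nonneg p.1] : (1 : ℝ) ≤ _).trans (le_abs_self _)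

/-- For the real polynomial `f(x,y) = x(x²+1)²`, the set of asymptotic critical values
`K_∞(f) = {y : ∃ x_ν, ‖x_ν‖ → ∞, f(x_ν) → y, ‖x_ν‖·‖df(x_ν)‖ → 0}` is empty. -/
theorem Kinfty_real_example_empty :
    ∀ y : ℝ, ¬ ∃ u : ℕ → ℝ × ℝ,
      Tendsto (fun ν => ‖u ν‖) atTop atTop ∧
      Tendsto (fun ν => (u ν).1 * ((u ν).1 ^ 2 + 1) ^ 2) atTop (nhds y) ∧
      Tendsto (fun ν => ‖u ν‖ *
        ‖fderiv ℝ (fun p : ℝ × ℝ => p.1 * (p.1 ^ 2 + 1) ^ 2) (u ν)‖) atTop (nhds 0) := by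
  rintro y ⟨u, hu, -, hsmall⟩
  exact not_tendsto_norm_mul_norm_fderiv_nhds_zero one_le_norm_fderiv_mul_sq_add_one_sq hu hsmall
end

section
/- Let f: ℝⁿ → ℝ be a polynomial that is bounded from below. Then inf f belongs to K(f) = K_0(f) ∪ K_∞(f), the set of generalized critical values of f. -/
/-!
Penalize `f` by `ε log (1 + |x|²)`. Since `f` is bounded below, the penalized function is coercive
and has a global minimizer `y`, where `∇f(y) = -2ε y / (1 + |y|²)`, so `‖y‖ ‖∇f(y)‖ ≤ 2ε`.
Taking `ε = δ / (1 + log (1 + |x|²))` for a point `x` with `f x < inf f + δ` gives moreover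
`f y < inf f + 2δ`. Letting `δ → 0` yields a minimizing sequence along which `‖y‖ ‖∇f(y)‖ → 0`.
Unless the infimum is attained, and hence a critical value, this sequence leaves every compact set.
-/

open Filter Function MvPolynomial Set Topology

theorem MvPolynomial.hasDerivAt_eval_update {𝕜 σ : Type*} [NontriviallyNormedField 𝕜]
    [DecidableEq σ] (f : MvPolynomial σ 𝕜) (c : σ → 𝕜) (j : σ) :
    HasDerivAt (fun s => eval (update c j s) f) (eval c (pderiv j f)) (c j) := by
  suffices ∀ t, HasDerivAt (fun s => eval (update c j s) f)
      (eval (update c j t) (pderiv j f)) t by simpa using this (c j)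
  intro t
  induction f using MvPolynomial.induction_on with
  | C a => simpa using hasDerivAt_const t a
  | add p q hp hq => simpa using hp.fun_add hq
  | mul_X p i hp =>
    by_cases h : i = j
    · subst h
      simpa [pderiv_X, add_comm, mul_comm] using hp.fun_mul (hasDerivAt_id t)
    · simpa [pderiv_X, Pi.single_eq_of_ne h, update_of_ne h, mul_comm] using hp.mul_const (c i)

theorem eq_zero_of_forall_le_of_hasDerivAt_update {ι : Type*} [DecidableEq ι] {F : (ι → ℝ) → ℝ}
    {y : ι → ℝ} (hy : ∀ x, F y ≤ F x) {j : ι} {d : ℝ}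
    (hd : HasDerivAt (fun s => F (update y j s)) d (y j)) : d = 0 :=
  IsLocalMin.hasDerivAt_eq_zero (.of_forall fun s => by simpa using hy (update y j s)) hd

theorem tendsto_norm_atTop_of_tendsto_of_forall_ne {α E X : Type*} [SeminormedAddCommGroup E]
    [ProperSpace E] [TopologicalSpace X] [T2Space X] {g : E → X} (hg : Continuous g)
    {l : Filter α} {u : α → E} {m : X} (hu : Tendsto (g ∘ u) l (𝓝 m)) (hm : ∀ x, g x ≠ m) :
    Tendsto (‖u ·‖) l atTop := by
  refine tendsto_norm_cocompact_atTop.comp (hasBasis_cocompact.tendsto_right_iff.2 ?_)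
  intro K hK
  have hnear : (g '' K)ᶜ ∈ 𝓝 m :=
    (hK.image hg).isClosed.isOpen_compl.mem_nhds fun ⟨x, _, hx⟩ => hm x hx
  filter_upwards [hu hnear] with a ha haK using ha ⟨u a, haK, rfl⟩

section LogPenalty

variable {ι : Type*} [Fintype ι]

/-- A smooth substitute for `log (1 + ‖x‖²)`: the sup norm of `ι → ℝ` is not differentiable. -/
noncomputable def logPenalty (x : ι → ℝ) : ℝ := Real.log (1 + ∑ i, x i ^ 2)

theorem one_add_sum_sq_pos (x : ι → ℝ) : 0 < 1 + ∑ i, x i ^ 2 := by positivity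

theorem logPenalty_nonneg (x : ι → ℝ) : 0 ≤ logPenalty x :=
  Real.log_nonneg (le_add_of_nonneg_right (by positivity))

theorem continuous_logPenalty : Continuous (logPenalty (ι := ι)) :=
  (continuous_const.add (continuous_finsetSum _ fun i _ => (continuous_apply i).pow 2)).log
    fun x => (one_add_sum_sq_pos x).ne'

theorem sq_norm_le_sum_sq (x : ι → ℝ) : ‖x‖ ^ 2 ≤ ∑ i, x i ^ 2 := by
  refine (Real.le_sqrt (norm_nonneg x) (by positivity)).1
    ((pi_norm_le_iff_of_nonneg (by positivity)).2 fun i => ?_)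
  rw [Real.norm_eq_abs, ← Real.sqrt_sq_eq_abs]
  exact Real.sqrt_le_sqrt (Finset.single_le_sum (fun i _ => sq_nonneg (x i)) (Finset.mem_univ i))

theorem tendsto_logPenalty_cocompact : Tendsto (logPenalty (ι := ι)) (cocompact _) atTop := by
  have hlog : Tendsto (fun r : ℝ => Real.log (1 + r ^ 2)) atTop atTop :=
    Real.tendsto_log_atTop.comp (tendsto_atTop_add_const_left _ 1 (tendsto_pow_atTop two_ne_zero))
  refine tendsto_atTop_mono (fun x => ?_) (hlog.comp tendsto_norm_cocompact_atTop)
  exact Real.log_le_log (by positivity) (by linarith [sq_norm_le_sum_sq x])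

theorem norm_mul_norm_smul_le (x : ι → ℝ) :
    ‖x‖ * ‖(2 / (1 + ∑ i, x i ^ 2)) • x‖ ≤ 2 := by
  have hS := one_add_sum_sq_pos x
  rw [norm_smul, Real.norm_eq_abs, abs_of_pos (by positivity)]
  calc ‖x‖ * (2 / (1 + ∑ i, x i ^ 2) * ‖x‖) = 2 * (‖x‖ ^ 2 / (1 + ∑ i, x i ^ 2)) := by ring
    _ ≤ 2 * 1 := by
      gcongr
      rw [div_le_one hS]
      linarith [sq_norm_le_sum_sq x]
    _ = 2 := mul_one 2

variable [DecidableEq ι]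

theorem hasDerivAt_logPenalty_update (x : ι → ℝ) (j : ι) :
    HasDerivAt (fun s => logPenalty (update x j s)) (2 / (1 + ∑ i, x i ^ 2) * x j) (x j) := by
  unfold logPenalty
  have hsq (i : ι) :
      HasDerivAt (fun s => update x j s i ^ 2) (if i = j then 2 * x j else 0) (x j) := by
    by_cases h : i = j
    · subst h
      simpa using hasDerivAt_pow 2 (x i)
    · simpa [update_of_ne h, h] using hasDerivAt_const (x j) (x i ^ 2)
  have hsum := (HasDerivAt.fun_sum (u := Finset.univ) fun i _ => hsq i).const_add 1
  simp only [Finset.sum_ite_eq', Finset.mem_univ, if_true] at hsum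
  have hlog := hsum.log (by simpa using (one_add_sum_sq_pos x).ne')
  rw [update_eq_self] at hlog
  convert hlog using 1
  ring

end LogPenalty

section Penalized

variable {ι : Type*} [Fintype ι] {F : (ι → ℝ) → ℝ}

theorem exists_forall_add_smul_logPenalty_le (hF : Continuous F) (hbdd : BddBelow (range F))
    {ε : ℝ} (hε : 0 < ε) :
    ∃ y, ∀ x, F y + ε * logPenalty y ≤ F x + ε * logPenalty x := by
  obtain ⟨m, hm⟩ := hbdd
  refine (hF.add (continuous_const.mul continuous_logPenalty)).exists_forall_le ?_
  exact tendsto_atTop_add_left_of_le _ m (fun x => hm ⟨x, rfl⟩)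
    (tendsto_logPenalty_cocompact.const_mul_atTop hε)

variable [DecidableEq ι] {F' : (ι → ℝ) → ι → ℝ}

theorem eq_smul_of_forall_add_smul_logPenalty_le
    (hF' : ∀ x j, HasDerivAt (fun s => F (update x j s)) (F' x j) (x j)) {ε : ℝ} {y : ι → ℝ}
    (hy : ∀ x, F y + ε * logPenalty y ≤ F x + ε * logPenalty x) :
    F' y = -ε • (2 / (1 + ∑ i, y i ^ 2)) • y := by
  funext j
  have h := eq_zero_of_forall_le_of_hasDerivAt_update (F := fun x => F x + ε * logPenalty x) hy
    ((hF' y j).add ((hasDerivAt_logPenalty_update y j).const_mul ε))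
  simp only [Pi.smul_apply, smul_eq_mul]
  linarith

theorem exists_lt_sInf_add_norm_mul_norm_le
    (hF' : ∀ x j, HasDerivAt (fun s => F (update x j s)) (F' x j) (x j))
    (hF : Continuous F) (hbdd : BddBelow (range F)) {δ : ℝ} (hδ : 0 < δ) :
    ∃ y, F y < sInf (range F) + 2 * δ ∧ ‖y‖ * ‖F' y‖ ≤ 2 * δ := by
  obtain ⟨_, ⟨x, rfl⟩, hx⟩ := exists_lt_of_csInf_lt (range_nonempty F) (lt_add_of_pos_right _ hδ)
  have hPx : 0 < 1 + logPenalty x := by linarith [logPenalty_nonneg x]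
  set ε := δ / (1 + logPenalty x)
  have hε : 0 < ε := div_pos hδ hPx
  have hεx : ε * logPenalty x ≤ δ :=
    calc ε * logPenalty x ≤ ε * (1 + logPenalty x) := by gcongr; linarith
      _ = δ := div_mul_cancel₀ δ hPx.ne'
  obtain ⟨y, hy⟩ := exists_forall_add_smul_logPenalty_le hF hbdd hε
  refine ⟨y, ?_, ?_⟩
  · linarith [hy x, mul_nonneg hε.le (logPenalty_nonneg y)]
  · calc ‖y‖ * ‖F' y‖ = ε * (‖y‖ * ‖(2 / (1 + ∑ i, y i ^ 2)) • y‖) := by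
          rw [eq_smul_of_forall_add_smul_logPenalty_le hF' hy, norm_smul, norm_neg,
            Real.norm_of_nonneg hε.le]
          ring
      _ ≤ ε * 2 := by gcongr; exact norm_mul_norm_smul_le y
      _ ≤ 2 * δ := by
        rw [mul_comm]
        gcongr
        exact div_le_self hδ.le (by linarith [logPenalty_nonneg x])

theorem exists_tendsto_sInf_tendsto_norm_mul_norm
    (hF' : ∀ x j, HasDerivAt (fun s => F (update x j s)) (F' x j) (x j))
    (hF : Continuous F) (hbdd : BddBelow (range F)) :
    ∃ u : ℕ → ι → ℝ, Tendsto (F ∘ u) atTop (𝓝 (sInf (range F))) ∧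
      Tendsto (fun ν => ‖u ν‖ * ‖F' (u ν)‖) atTop (𝓝 0) := by
  have hδ : ∀ ν : ℕ, 0 < 1 / ((ν : ℝ) + 1) := fun ν => by positivity
  choose u hu using fun ν => exists_lt_sInf_add_norm_mul_norm_le hF' hF hbdd (hδ ν)
  have h2δ : Tendsto (fun ν : ℕ => 2 * (1 / ((ν : ℝ) + 1))) atTop (𝓝 0) := by
    simpa using tendsto_one_div_add_atTop_nhds_zero_nat.const_mul (2 : ℝ)
  refine ⟨u, ?_, ?_⟩
  · refine tendsto_of_tendsto_of_tendsto_of_le_of_le tendsto_const_nhds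
      (by simpa using h2δ.const_add (sInf (range F)))
      (fun ν => csInf_le hbdd ⟨u ν, rfl⟩) (fun ν => (hu ν).1.le)
  · exact tendsto_of_tendsto_of_tendsto_of_le_of_le tendsto_const_nhds h2δ
      (fun ν => by positivity) (fun ν => (hu ν).2)

end Penalized

/-- If a real polynomial `f : ℝⁿ → ℝ` is bounded from below, then `inf f` belongs to
`K(f) = K₀(f) ∪ K_∞(f)`, the set of generalized critical values: either `inf f` is a
critical value of `f`, or there is a sequence `x_ν` with `‖x_ν‖ → ∞`,
`f(x_ν) → inf f` and `‖x_ν‖·‖df(x_ν)‖ → 0`. -/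
theorem inf_mem_generalized_critical_values {n : ℕ} (f : MvPolynomial (Fin n) ℝ)
    (hbdd : BddBelow (Set.range fun x : Fin n → ℝ => MvPolynomial.eval x f)) :
    (∃ x : Fin n → ℝ, (∀ j, MvPolynomial.eval x (pderiv j f) = 0) ∧
        MvPolynomial.eval x f = sInf (Set.range fun x : Fin n → ℝ => MvPolynomial.eval x f)) ∨
    (∃ u : ℕ → Fin n → ℝ,
      Tendsto (fun ν => ‖u ν‖) atTop atTop ∧
      Tendsto (fun ν => MvPolynomial.eval (u ν) f) atTop
        (nhds (sInf (Set.range fun x : Fin n → ℝ => MvPolynomial.eval x f))) ∧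
      Tendsto (fun ν => ‖u ν‖ * ‖(fun j : Fin n => MvPolynomial.eval (u ν) (pderiv j f))‖)
        atTop (nhds 0)) := by
  have hF' := f.hasDerivAt_eval_update
  by_cases hattained : ∃ x, eval x f = sInf (range fun x : Fin n → ℝ => eval x f)
  · obtain ⟨x, hx⟩ := hattained
    have hmin : ∀ z, eval x f ≤ eval z f := fun z => hx ▸ csInf_le hbdd ⟨z, rfl⟩
    exact .inl ⟨x, fun j =>
      eq_zero_of_forall_le_of_hasDerivAt_update (F := (eval · f)) hmin (hF' x j), hx⟩
  · push Not at hattained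
    obtain ⟨u, hu, hgrad⟩ := exists_tendsto_sInf_tendsto_norm_mul_norm hF' f.continuous_eval hbdd
    exact .inr ⟨u, tendsto_norm_atTop_of_tendsto_of_forall_ne f.continuous_eval hu hattained,
      hu, hgrad⟩
end
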